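/- In the Trimmed Graphical Lasso deterministic setting, under hypotheses (H1)–(H4) and assuming the off-diagonal support S of Θ* satisfies |S| ≤ k, the error matrix satisfies ‖Δ̃‖_{1,off} ≤ (5√(k+p) + 2τ1/λ)·‖Δ̃‖_F. (Conversion between the off-diagonal ℓ1 norm and the Frobenius norm of the error, established in the proof of Theorem 1.) -/

import Mathlib

/-
The error Δ = Θ̃ − Θ* lies in a cone. Splitting Γ̃ − Θ̃⁻¹ (Γ̃ the weighted sample covariance)
through Θ*⁻¹ and the oracle covariance Γ*, stationarity (H1) gives
  ⟨Θ*⁻¹ − Θ̃⁻¹, Δ⟩ + ⟨Γ* − Θ*⁻¹, Δ⟩ + ⟨Γ̃ − Γ*, Δ⟩ ≤ λ (‖Θ*‖_{1,off} − ‖Θ̃‖_{1,off}).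
The first term is nonnegative because matrix inversion is antitone on positive definite
matrices, the second is at least −(λ/4)‖Δ‖₁ by Hölder and (H4), and the third at least
−τ₁‖Δ‖_F − (λ/4)‖Δ‖₁ by (H3). Decomposability of the ℓ₁ norm over the support S bounds the
right-hand side by λ(‖Δ_S‖₁ − ‖Δ_{Sᶜ}‖₁), so the off-support mass is controlled by the mass on
S and on the diagonal, and both of these are at most √(k + p)‖Δ‖_F by Cauchy–Schwarz.
-/

open Matrix

/-- Trace inner product ⟨U,V⟩ = tr(U Vᵀ). -/
noncomputable def traceInner {p : ℕ} (U V : Matrix (Fin p) (Fin p) ℝ) : ℝ :=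
  (U * Vᵀ).trace

/-- Frobenius norm. -/
noncomputable def frobNorm {p : ℕ} (U : Matrix (Fin p) (Fin p) ℝ) : ℝ :=
  Real.sqrt (∑ i, ∑ j, (U i j) ^ 2)

/-- Entrywise ℓ1 norm: ‖U‖₁ = Σ_{i,j} |U_{ij}|. -/
noncomputable def l1Norm {p : ℕ} (U : Matrix (Fin p) (Fin p) ℝ) : ℝ :=
  ∑ i, ∑ j, |U i j|

/-- Off-diagonal entrywise ℓ1 norm: ‖U‖_{1,off} = Σ_{i≠j} |U_{ij}|. -/
noncomputable def offNorm {p : ℕ} (U : Matrix (Fin p) (Fin p) ℝ) : ℝ :=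
  ∑ ij ∈ Finset.univ.filter (fun ij : Fin p × Fin p => ij.1 ≠ ij.2), |U ij.1 ij.2|

/-- Entrywise sup norm: ‖U‖_∞ = max_{i,j} |U_{ij}|. -/
noncomputable def linfNorm {p : ℕ} (U : Matrix (Fin p) (Fin p) ℝ) : ℝ :=
  ⨆ ij : Fin p × Fin p, |U ij.1 ij.2|

open Finset

open scoped MatrixOrder in
theorem Matrix.PosSemidef.trace_mul_nonneg {n : Type*} [Fintype n] [DecidableEq n]
    {P Q : Matrix n n ℝ} (hP : P.PosSemidef) (hQ : Q.PosSemidef) : 0 ≤ (P * Q).trace := by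
  -- tr(P Q) = tr(√Q P √Q)
  have hsqrt : (CFC.sqrt Q)ᴴ = CFC.sqrt Q := (CFC.sqrt_nonneg Q).posSemidef.isHermitian.eq
  rw [← CFC.sqrt_mul_sqrt_self Q hQ.nonneg, ← mul_assoc, Matrix.trace_mul_cycle]
  simpa only [hsqrt] using (hP.mul_mul_conjTranspose_same (CFC.sqrt Q)).trace_nonneg

section EntrywiseNorms

variable {p : ℕ}

lemma traceInner_eq_sum (U V : Matrix (Fin p) (Fin p) ℝ) :
    traceInner U V = ∑ i, ∑ j, U i j * V i j := by
  simp [traceInner, Matrix.trace, Matrix.mul_apply]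

lemma traceInner_sub_left (U V W : Matrix (Fin p) (Fin p) ℝ) :
    traceInner (U - V) W = traceInner U W - traceInner V W := by
  simp [traceInner, Matrix.sub_mul]

lemma traceInner_inv_sub_inv_nonneg {A B : Matrix (Fin p) (Fin p) ℝ}
    (hA : A.PosDef) (hB : B.PosDef) : 0 ≤ traceInner (A⁻¹ - B⁻¹) (B - A) := by
  have hD : (B - A)ᵀ = B - A := by
    rw [Matrix.transpose_sub, ← Matrix.conjTranspose_eq_transpose_of_trivial,
      ← Matrix.conjTranspose_eq_transpose_of_trivial, hB.isHermitian.eq, hA.isHermitian.eq]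
  have hresolvent : A⁻¹ - B⁻¹ = A⁻¹ * (B - A) * B⁻¹ := by
    rw [Matrix.mul_sub, Matrix.sub_mul, mul_assoc, Matrix.mul_nonsing_inv _ hB.det_pos.ne'.isUnit,
      mul_one, Matrix.nonsing_inv_mul _ hA.det_pos.ne'.isUnit, one_mul]
  have hQ : ((B - A) * B⁻¹ * (B - A)).PosSemidef := by
    simpa only [Matrix.conjTranspose_eq_transpose_of_trivial, hD]
      using hB.inv.posSemidef.mul_mul_conjTranspose_same (B - A)
  rw [traceInner, hD, hresolvent, mul_assoc, mul_assoc, ← mul_assoc (B - A)]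
  exact hA.inv.posSemidef.trace_mul_nonneg hQ

lemma abs_le_linfNorm (U : Matrix (Fin p) (Fin p) ℝ) (i j : Fin p) : |U i j| ≤ linfNorm U :=
  le_ciSup (f := fun ij : Fin p × Fin p => |U ij.1 ij.2|) (Finite.bddAbove_range _) (i, j)

lemma l1Norm_nonneg (U : Matrix (Fin p) (Fin p) ℝ) : 0 ≤ l1Norm U :=
  sum_nonneg fun _ _ => sum_nonneg fun _ _ => abs_nonneg _

lemma abs_traceInner_le_linfNorm_mul_l1Norm (U V : Matrix (Fin p) (Fin p) ℝ) :
    |traceInner U V| ≤ linfNorm U * l1Norm V := by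
  rw [traceInner_eq_sum, l1Norm, mul_sum]
  refine (abs_sum_le_sum_abs _ _).trans (sum_le_sum fun i _ => ?_)
  rw [mul_sum]
  refine (abs_sum_le_sum_abs _ _).trans (sum_le_sum fun j _ => ?_)
  rw [abs_mul]
  exact mul_le_mul_of_nonneg_right (abs_le_linfNorm U i j) (abs_nonneg _)

noncomputable def l1NormOn (T : Finset (Fin p × Fin p)) (U : Matrix (Fin p) (Fin p) ℝ) : ℝ :=
  ∑ ij ∈ T, |U ij.1 ij.2|

lemma l1NormOn_nonneg (T : Finset (Fin p × Fin p)) (U : Matrix (Fin p) (Fin p) ℝ) :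
    0 ≤ l1NormOn T U :=
  sum_nonneg fun _ _ => abs_nonneg _

lemma offNorm_eq_l1NormOn_offDiag (U : Matrix (Fin p) (Fin p) ℝ) :
    offNorm U = l1NormOn univ.offDiag U := by
  rw [offNorm, l1NormOn]
  congr 1
  ext ij
  simp

lemma l1Norm_eq_l1NormOn_diag_add_offNorm (U : Matrix (Fin p) (Fin p) ℝ) :
    l1Norm U = l1NormOn univ.diag U + offNorm U := by
  rw [offNorm_eq_l1NormOn_offDiag, l1NormOn, l1NormOn, ← sum_union (disjoint_diag_offDiag _),
    diag_union_offDiag, univ_product_univ, l1Norm, ← Fintype.sum_prod_type']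

lemma l1NormOn_le_sqrt_card_mul_frobNorm (T : Finset (Fin p × Fin p))
    (U : Matrix (Fin p) (Fin p) ℝ) : l1NormOn T U ≤ √(#T : ℝ) * frobNorm U := by
  have hsq : ∑ ij ∈ T, |U ij.1 ij.2| ^ 2 ≤ ∑ i, ∑ j, U i j ^ 2 := by
    rw [← Fintype.sum_prod_type']
    simp only [sq_abs]
    exact sum_le_sum_of_subset_of_nonneg (subset_univ T) fun _ _ _ => sq_nonneg _
  rw [frobNorm, ← Real.sqrt_mul (Nat.cast_nonneg _), Real.le_sqrt (l1NormOn_nonneg T U)]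
  calc l1NormOn T U ^ 2 ≤ #T * ∑ ij ∈ T, |U ij.1 ij.2| ^ 2 := sq_sum_le_card_mul_sum_sq
    _ ≤ #T * ∑ i, ∑ j, U i j ^ 2 := by gcongr
  positivity

noncomputable def offDiagSupport (A : Matrix (Fin p) (Fin p) ℝ) : Finset (Fin p × Fin p) :=
  univ.filter fun ij => ij.1 ≠ ij.2 ∧ A ij.1 ij.2 ≠ 0

lemma offDiagSupport_subset_offDiag (A : Matrix (Fin p) (Fin p) ℝ) :
    offDiagSupport A ⊆ univ.offDiag := by
  intro ij hij
  simp_all [offDiagSupport]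

lemma offNorm_eq_l1NormOn_offDiagSupport_add (A U : Matrix (Fin p) (Fin p) ℝ) :
    offNorm U = l1NormOn (offDiagSupport A) U + l1NormOn (univ.offDiag \ offDiagSupport A) U := by
  rw [offNorm_eq_l1NormOn_offDiag, l1NormOn, l1NormOn, l1NormOn, add_comm,
    sum_sdiff (offDiagSupport_subset_offDiag A)]

lemma eq_zero_of_mem_offDiag_sdiff_offDiagSupport {A : Matrix (Fin p) (Fin p) ℝ}
    {ij : Fin p × Fin p} (hij : ij ∈ univ.offDiag \ offDiagSupport A) : A ij.1 ij.2 = 0 := by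
  simp_all [offDiagSupport]

lemma offNorm_sub_offNorm_le (A B : Matrix (Fin p) (Fin p) ℝ) :
    offNorm A - offNorm B ≤
      l1NormOn (offDiagSupport A) (B - A) - l1NormOn (univ.offDiag \ offDiagSupport A) (B - A) := by
  have hA : l1NormOn (univ.offDiag \ offDiagSupport A) A = 0 :=
    sum_eq_zero fun ij hij => by rw [eq_zero_of_mem_offDiag_sdiff_offDiagSupport hij, abs_zero]
  have hB : l1NormOn (univ.offDiag \ offDiagSupport A) B =
      l1NormOn (univ.offDiag \ offDiagSupport A) (B - A) :=
    sum_congr rfl fun ij hij => by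
      rw [Matrix.sub_apply, eq_zero_of_mem_offDiag_sdiff_offDiagSupport hij, sub_zero]
  have hS : l1NormOn (offDiagSupport A) A - l1NormOn (offDiagSupport A) B ≤
      l1NormOn (offDiagSupport A) (B - A) := by
    rw [l1NormOn, l1NormOn, l1NormOn, ← sum_sub_distrib]
    exact sum_le_sum fun ij _ => by
      rw [Matrix.sub_apply, abs_sub_comm]
      exact abs_sub_abs_le_abs_sub _ _
  rw [offNorm_eq_l1NormOn_offDiagSupport_add A A, offNorm_eq_l1NormOn_offDiagSupport_add A B]
  linarith

lemma offNorm_le_of_basic_inequality (Θstar Θtil : Matrix (Fin p) (Fin p) ℝ) {lam τ : ℝ}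
    (hlam : 0 < lam) {k : ℕ} (hk : #(offDiagSupport Θstar) ≤ k)
    (hbasic : 0 ≤ lam * (offNorm Θstar - offNorm Θtil) + lam / 2 * l1Norm (Θtil - Θstar)
      + τ * frobNorm (Θtil - Θstar)) :
    offNorm (Θtil - Θstar) ≤
      (5 * √((k : ℝ) + p) + 2 * τ / lam) * frobNorm (Θtil - Θstar) := by
  set Δ := Θtil - Θstar
  set onS := l1NormOn (offDiagSupport Θstar) Δ
  set offS := l1NormOn (univ.offDiag \ offDiagSupport Θstar) Δ
  set diag := l1NormOn univ.diag Δ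
  have hsqrt_card_le {m : ℕ} (hm : m ≤ k + p) : √(m : ℝ) * frobNorm Δ ≤ √(k + p) * frobNorm Δ :=
    mul_le_mul_of_nonneg_right (Real.sqrt_le_sqrt (by exact_mod_cast hm)) (Real.sqrt_nonneg _)
  have honS : onS ≤ √(k + p) * frobNorm Δ :=
    (l1NormOn_le_sqrt_card_mul_frobNorm _ Δ).trans (hsqrt_card_le (by omega))
  have hdiag : diag ≤ √(k + p) * frobNorm Δ :=
    (l1NormOn_le_sqrt_card_mul_frobNorm _ Δ).trans (hsqrt_card_le (by simp))
  have hsplit : offNorm Δ = onS + offS := offNorm_eq_l1NormOn_offDiagSupport_add Θstar Δ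
  have hl1 : l1Norm Δ = diag + offNorm Δ := l1Norm_eq_l1NormOn_diag_add_offNorm Δ
  have hdecomp : lam * (offNorm Θstar - offNorm Θtil) ≤ lam * (onS - offS) :=
    mul_le_mul_of_nonneg_left (offNorm_sub_offNorm_le Θstar Θtil) hlam.le
  -- the cone condition  offS ≤ 3 onS + diag + 2τ‖Δ‖_F / λ, multiplied by λ
  have hcone : lam * offNorm Δ ≤ lam * (4 * onS + diag) + 2 * τ * frobNorm Δ := by
    rw [hl1, hsplit] at hbasic
    rw [hsplit]
    linarith
  rw [← mul_le_mul_iff_of_pos_left hlam]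
  calc lam * offNorm Δ ≤ lam * (4 * onS + diag) + 2 * τ * frobNorm Δ := hcone
    _ ≤ lam * (5 * (√(k + p) * frobNorm Δ)) + 2 * τ * frobNorm Δ := by gcongr; linarith
    _ = lam * ((5 * √(k + p) + 2 * τ / lam) * frobNorm Δ) := by field_simp

lemma basic_inequality {Θstar Θtil Γstar Γtil : Matrix (Fin p) (Fin p) ℝ}
    (hΘstar : Θstar.PosDef) (hΘtil : Θtil.PosDef) {lam τ₁ τ₂ : ℝ}
    (hstat : traceInner (Γtil - Θtil⁻¹) (Θtil - Θstar) ≤ lam * (offNorm Θstar - offNorm Θtil))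
    (hincoh : |traceInner (Γtil - Γstar) (Θtil - Θstar)|
      ≤ τ₁ * frobNorm (Θtil - Θstar) + τ₂ * l1Norm (Θtil - Θstar))
    (hdev : 4 * linfNorm (Γstar - Θstar⁻¹) ≤ lam) (hτ₂ : 4 * τ₂ ≤ lam) :
    0 ≤ lam * (offNorm Θstar - offNorm Θtil) + lam / 2 * l1Norm (Θtil - Θstar)
      + τ₁ * frobNorm (Θtil - Θstar) := by
  set Δ := Θtil - Θstar
  have hsplit : traceInner (Γtil - Θtil⁻¹) Δ = traceInner (Θstar⁻¹ - Θtil⁻¹) Δ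
      + traceInner (Γstar - Θstar⁻¹) Δ + traceInner (Γtil - Γstar) Δ := by
    simp only [traceInner_sub_left]
    ring
  have hmono : 0 ≤ traceInner (Θstar⁻¹ - Θtil⁻¹) Δ := traceInner_inv_sub_inv_nonneg hΘstar hΘtil
  have hdev' : -(lam / 4 * l1Norm Δ) ≤ traceInner (Γstar - Θstar⁻¹) Δ := by
    refine neg_le_of_abs_le ((abs_traceInner_le_linfNorm_mul_l1Norm _ Δ).trans ?_)
    gcongr
    · exact l1Norm_nonneg Δ
    · linarith
  have hτ₂' : τ₂ * l1Norm Δ ≤ lam / 4 * l1Norm Δ := by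
    gcongr
    · exact l1Norm_nonneg Δ
    · linarith
  linarith [neg_abs_le (traceInner (Γtil - Γstar) Δ)]

end EntrywiseNorms

theorem offNorm_le_frobNorm_conversion_general
    (p n h : ℕ)
    (x : Fin n → Fin p → ℝ)
    (Θstar Θtil : Matrix (Fin p) (Fin p) ℝ)
    (hΘstar : Θstar.PosDef) (hΘtil : Θtil.PosDef)
    (wtil wstar : Fin n → ℝ)
    (τ₁ τ₂ lam : ℝ) (hlam : 0 < lam)
    (H1 : traceInner
        ((1 / (h : ℝ)) • ∑ i, wtil i • Matrix.vecMulVec (x i) (x i) - Θtil⁻¹)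
        (Θtil - Θstar) ≤ lam * (offNorm Θstar - offNorm Θtil))
    (H3 : |traceInner
        ((1 / (h : ℝ)) • ∑ i, (wtil i - wstar i) • Matrix.vecMulVec (x i) (x i))
        (Θtil - Θstar)|
        ≤ τ₁ * frobNorm (Θtil - Θstar) + τ₂ * l1Norm (Θtil - Θstar))
    (H4a : 4 * max
        (linfNorm ((1 / (h : ℝ)) • ∑ i, wstar i • Matrix.vecMulVec (x i) (x i) - Θstar⁻¹))
        τ₂ ≤ lam)
    (k : ℕ)
    (hk : (Finset.univ.filter
        (fun ij : Fin p × Fin p => ij.1 ≠ ij.2 ∧ Θstar ij.1 ij.2 ≠ 0)).card ≤ k) :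
    offNorm (Θtil - Θstar) ≤
      (5 * Real.sqrt ((k : ℝ) + p) + 2 * τ₁ / lam) * frobNorm (Θtil - Θstar) := by
  simp only [sub_smul, sum_sub_distrib, smul_sub] at H3
  rw [mul_max_of_nonneg _ _ zero_le_four, max_le_iff] at H4a
  exact offNorm_le_of_basic_inequality Θstar Θtil hlam hk <|
    basic_inequality hΘstar hΘtil H1 H3 H4a.1 H4a.2

/-- Conversion between the off-diagonal ℓ1 norm and the Frobenius norm of the error. -/
theorem offNorm_le_frobNorm_conversion
    (p n h : ℕ) (hp : 0 < p) (hn : 0 < n) (hh : 0 < h)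
    (x : Fin n → Fin p → ℝ)
    (Θstar Θtil : Matrix (Fin p) (Fin p) ℝ)
    (hΘstar : Θstar.PosDef) (hΘtil : Θtil.PosDef)
    (R : ℝ) (hR : 0 < R) (hΘstarR : l1Norm Θstar ≤ R) (hΘtilR : l1Norm Θtil ≤ R)
    (wtil wstar : Fin n → ℝ)
    (hwtil : ∀ i, wtil i ∈ Set.Icc (0 : ℝ) 1) (hwstar : ∀ i, wstar i ∈ Set.Icc (0 : ℝ) 1)
    (κ τ₁ τ₂ lam : ℝ) (hκ : 0 < κ) (hτ₁ : 0 ≤ τ₁) (hτ₂ : 0 ≤ τ₂) (hlam : 0 < lam)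
    (H1 : traceInner
        ((1 / (h : ℝ)) • ∑ i, wtil i • Matrix.vecMulVec (x i) (x i) - Θtil⁻¹)
        (Θtil - Θstar) ≤ lam * (offNorm Θstar - offNorm Θtil))
    (H2 : ∀ Δ : Matrix (Fin p) (Fin p) ℝ, Δ.IsSymm → (Θstar + Δ).PosDef →
        frobNorm Δ ≤ 1 →
        traceInner (Θstar⁻¹ - (Θstar + Δ)⁻¹) Δ ≥ κ * (frobNorm Δ) ^ 2)
    (H3 : |traceInner
        ((1 / (h : ℝ)) • ∑ i, (wtil i - wstar i) • Matrix.vecMulVec (x i) (x i))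
        (Θtil - Θstar)|
        ≤ τ₁ * frobNorm (Θtil - Θstar) + τ₂ * l1Norm (Θtil - Θstar))
    (H4a : 4 * max
        (linfNorm ((1 / (h : ℝ)) • ∑ i, wstar i • Matrix.vecMulVec (x i) (x i) - Θstar⁻¹))
        τ₂ ≤ lam)
    (H4b : lam ≤ (κ - τ₁) / (3 * R))
    (k : ℕ)
    (hk : (Finset.univ.filter
        (fun ij : Fin p × Fin p => ij.1 ≠ ij.2 ∧ Θstar ij.1 ij.2 ≠ 0)).card ≤ k) :
    offNorm (Θtil - Θstar) ≤
      (5 * Real.sqrt ((k : ℝ) + p) + 2 * τ₁ / lam) * frobNorm (Θtil - Θstar) :=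
  offNorm_le_frobNorm_conversion_general p n h x Θstar Θtil hΘstar hΘtil wtil wstar τ₁ τ₂ lam hlam
    H1 H3 H4a k hk
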